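/- arXiv:1406.7509 — 4 statements merged into one kernel-verified Lean document; each statement's English description precedes it below -/
import Mathlib

section
/- Let β > 0, η ∈ (0,1), and define k(t,s) = βt/(β+η) + (t/(β+η))(η−s)H(η−s) − (t−s)H(t−s) for t,s ∈ [0,1]. If β + η ≥ 1 then k(t,s) ≥ 0 for all t,s ∈ [0,1]. -/
open Set

/-- If `β + η ≥ 1`, the Green's function of the thermostat problem
`k(t,s) = βt/(β+η) + (t/(β+η))(η-s)H(η-s) - (t-s)H(t-s)` is nonnegative
on `[0,1]²`. -/
theorem thermostat_kernel_nonneg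
    (β η : ℝ) (hβ : 0 < β) (hη : η ∈ Ioo (0:ℝ) 1) (hβη : 1 ≤ β + η)
    (H : ℝ → ℝ) (hH : ∀ τ : ℝ, H τ = if 0 ≤ τ then 1 else 0)
    (k : ℝ → ℝ → ℝ)
    (hk : ∀ t ∈ Icc (0:ℝ) 1, ∀ s ∈ Icc (0:ℝ) 1,
      k t s = β * t / (β + η) + (t / (β + η)) * (η - s) * H (η - s)
        - (t - s) * H (t - s)) :
    ∀ t ∈ Icc (0:ℝ) 1, ∀ s ∈ Icc (0:ℝ) 1, 0 ≤ k t s := by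
  intro t ht s hs
  obtain ⟨ht0, ht1⟩ := ht
  obtain ⟨hs0, hs1⟩ := hs
  obtain ⟨hη0, hη1⟩ := hη
  have hD : (0:ℝ) < β + η := by linarith
  rw [hk t ⟨ht0, ht1⟩ s ⟨hs0, hs1⟩, hH, hH]
  split_ifs with h1 h2 h2
  · -- s ≤ η and s ≤ t
    have key : β * t / (β + η) + (t / (β + η)) * (η - s) * 1 - (t - s) * 1
        = s * (β + η - t) / (β + η) := by
      field_simp
      ring
    rw [key]
    apply div_nonneg _ hD.le
    nlinarith
  · -- s ≤ η and t < s
    have key : β * t / (β + η) + (t / (β + η)) * (η - s) * 1 - (t - s) * 0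
        = t * (β + η - s) / (β + η) := by
      field_simp
      ring
    rw [key]
    apply div_nonneg _ hD.le
    nlinarith
  · -- η < s and s ≤ t
    have key : β * t / (β + η) + (t / (β + η)) * (η - s) * 0 - (t - s) * 1
        = ((β + η) * s - η * t) / (β + η) := by
      field_simp
      ring
    rw [key]
    apply div_nonneg _ hD.le
    nlinarith
  · -- η < s and t < s
    simp only [mul_zero, sub_zero]
    positivity
end

section
/- Let β > 0, η ∈ (0,1) with β + η ≥ 1, and k(t,s) = βt/(β+η) + (t/(β+η))(η−s)H(η−s) − (t−s)H(t−s). Define Φ(s) = (β/(β+η))·s for s ≥ η and Φ(s) = s(1 − s/(β+η)) for s < η. Then k(t,s) ≤ Φ(s) for all t,s ∈ [0,1]. -/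
open Set

/-- Upper bound for the thermostat Green's function when `β + η ≥ 1`:
`k(t,s) ≤ Φ(s)` with `Φ(s) = (β/(β+η))s` for `s ≥ η` and
`Φ(s) = s(1 - s/(β+η))` for `s < η`. -/
theorem thermostat_kernel_upper_bound
    (β η : ℝ) (hβ : 0 < β) (hη : η ∈ Ioo (0:ℝ) 1) (hβη : 1 ≤ β + η)
    (H : ℝ → ℝ) (hH : ∀ τ : ℝ, H τ = if 0 ≤ τ then 1 else 0)
    (k : ℝ → ℝ → ℝ)
    (hk : ∀ t ∈ Icc (0:ℝ) 1, ∀ s ∈ Icc (0:ℝ) 1,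
      k t s = β * t / (β + η) + (t / (β + η)) * (η - s) * H (η - s)
        - (t - s) * H (t - s))
    (Φ : ℝ → ℝ)
    (hΦ : ∀ s : ℝ, Φ s = if η ≤ s then (β / (β + η)) * s
      else s * (1 - s / (β + η))) :
    ∀ t ∈ Icc (0:ℝ) 1, ∀ s ∈ Icc (0:ℝ) 1, k t s ≤ Φ s := by
  intro t ht s hs
  obtain ⟨ht0, ht1⟩ := ht
  obtain ⟨hs0, hs1⟩ := hs
  have hη0 := hη.1
  have hη1 := hη.2
  have hD : 0 < β + η := by linarith
  rw [hk t ⟨ht0, ht1⟩ s ⟨hs0, hs1⟩, hΦ s]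
  by_cases h1 : η ≤ s
  · have hzero : (t / (β + η)) * (η - s) * H (η - s) = 0 := by
      rw [hH]
      split
      · have he : η - s = 0 := le_antisymm (by linarith) (by assumption)
        rw [he]; ring
      · ring
    rw [if_pos h1, hzero]
    by_cases h2 : s ≤ t
    · rw [hH, if_pos (by linarith : (0:ℝ) ≤ t - s)]
      rw [← sub_nonneg]
      have : β / (β + η) * s - (β * t / (β + η) + 0 - (t - s) * 1)
          = (η * (t - s)) / (β + η) := by field_simp; ring
      rw [this]
      exact div_nonneg (by nlinarith) hD.le
    · rw [hH, if_neg (by linarith : ¬ (0:ℝ) ≤ t - s)]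
      rw [← sub_nonneg]
      have heq : β / (β + η) * s - (β * t / (β + η) + 0 - (t - s) * 0)
          = (β * (s - t)) / (β + η) := by field_simp; ring
      rw [heq]
      have : (0:ℝ) ≤ β * (s - t) := by nlinarith
      exact div_nonneg this hD.le
  · push_neg at h1
    rw [if_neg (not_le.mpr h1), hH (η - s), if_pos (by linarith : (0:ℝ) ≤ η - s)]
    by_cases h2 : s ≤ t
    · rw [hH, if_pos (by linarith : (0:ℝ) ≤ t - s)]
      rw [← sub_nonneg]
      have : s * (1 - s / (β + η)) - (β * t / (β + η) + t / (β + η) * (η - s) * 1 - (t - s) * 1)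
          = (s * (t - s)) / (β + η) := by field_simp; ring
      rw [this]
      exact div_nonneg (by nlinarith) hD.le
    · rw [hH, if_neg (by linarith : ¬ (0:ℝ) ≤ t - s)]
      rw [← sub_nonneg]
      have : s * (1 - s / (β + η)) - (β * t / (β + η) + t / (β + η) * (η - s) * 1 - (t - s) * 0)
          = ((s - t) * (β + η - s)) / (β + η) := by field_simp; ring
      rw [this]
      have h3 : (0:ℝ) ≤ (s - t) * (β + η - s) := by nlinarith
      exact div_nonneg h3 hD.le
end

section
/- Let β > 0, η ∈ (0,1) with β + η ≥ 1, k and Φ as above, and let [a,b] ⊂ (0,1). Then k(t,s) ≥ c₁Φ(s) for all t ∈ [a,b] and s ∈ [0,1], where c₁ = min{a, 1 − b/(β+η)}. -/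
/-!
With `B = β + η` and the profile `g(s) = 1 - min(s, η)/B`, the kernel and the comparison function factor as
`k(t,s) = t g(s) - (t - s)⁺` and `Φ(s) = s g(s)`. For `s ≥ t` the bound reduces to `c s ≤ t`.
For `s < t` one uses `c ≤ 1 - t/B` and is left with `(t - s) min(s, η) ≤ t s g(s)`, which holds
because `t ≤ 1 ≤ B`.
-/

open Set

lemma mul_heaviside_eq_max {H : ℝ → ℝ} (hH : ∀ τ : ℝ, H τ = if 0 ≤ τ then 1 else 0) (x : ℝ) :
    x * H x = max x 0 := by
  rw [hH]
  split_ifs with hx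
  · rw [mul_one, max_eq_left hx]
  · rw [mul_zero, max_eq_right (not_le.mp hx).le]

lemma max_sub_zero_eq_sub_min (x y : ℝ) : max (y - x) 0 = y - min x y := by
  rcases le_total x y with hxy | hyx
  · rw [min_eq_left hxy, max_eq_left (sub_nonneg.mpr hxy)]
  · rw [min_eq_right hyx, max_eq_right (sub_nonpos.mpr hyx), sub_self]

lemma mul_profile_le_mul_profile_sub_pos_part {B m s t c : ℝ} (hB : 0 < B) (hm0 : 0 ≤ m)
    (hms : m ≤ s) (hmB : m ≤ B) (htB : t ≤ B) (hcs : c * s ≤ t) (hct : c ≤ 1 - t / B) :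
    c * (s * (1 - m / B)) ≤ t * (1 - m / B) - max (t - s) 0 := by
  have hg : 0 ≤ 1 - m / B := sub_nonneg.mpr ((div_le_one hB).mpr hmB)
  rcases le_total t s with hts | hst
  · rw [max_eq_right (sub_nonpos.mpr hts), sub_zero, ← mul_assoc]
    exact mul_le_mul_of_nonneg_right hcs hg
  · rw [max_eq_left (sub_nonneg.mpr hst)]
    have hsg : 0 ≤ s * (1 - m / B) := mul_nonneg (hm0.trans hms) hg
    have key : (t - s) * m ≤ t * s * (1 - m / B) := by
      have hm_le : t * (m - s) ≤ 0 :=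
        mul_nonpos_of_nonneg_of_nonpos (by linarith) (sub_nonpos.mpr hms)
      have hrest : 0 ≤ s * m * (1 - t / B) :=
        mul_nonneg (mul_nonneg (hm0.trans hms) hm0) (sub_nonneg.mpr ((div_le_one hB).mpr htB))
      have expand : t * s * (1 - m / B) - (t - s) * m = s * m * (1 - t / B) - t * (m - s) := by
        field_simp; ring
      linarith
    calc c * (s * (1 - m / B)) ≤ (1 - t / B) * (s * (1 - m / B)) :=
          mul_le_mul_of_nonneg_right hct hsg
      _ = s * (1 - m / B) - t * s * (1 - m / B) / B := by ring
      _ ≤ s * (1 - m / B) - (t - s) * m / B := by gcongr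
      _ = t * (1 - m / B) - (t - s) := by field_simp; ring

theorem thermostat_kernel_lower_bound_general
    (β η : ℝ) (hβ : 0 < β) (hη : η ∈ Ioo (0:ℝ) 1) (hβη : 1 ≤ β + η)
    (H : ℝ → ℝ) (hH : ∀ τ : ℝ, H τ = if 0 ≤ τ then 1 else 0)
    (k : ℝ → ℝ → ℝ)
    (hk : ∀ t ∈ Icc (0:ℝ) 1, ∀ s ∈ Icc (0:ℝ) 1,
      k t s = β * t / (β + η) + (t / (β + η)) * (η - s) * H (η - s)
        - (t - s) * H (t - s))
    (Φ : ℝ → ℝ)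
    (hΦ : ∀ s : ℝ, Φ s = if η ≤ s then (β / (β + η)) * s
      else s * (1 - s / (β + η)))
    (a b : ℝ) (ha : 0 < a) (hb : b < 1) :
    ∀ t ∈ Icc a b, ∀ s ∈ Icc (0:ℝ) 1,
      min a (1 - b / (β + η)) * Φ s ≤ k t s := by
  rintro t ⟨hat, htb⟩ s ⟨hs0, hs1⟩
  have hB : 0 < β + η := by linarith [hη.1]
  have hk' : k t s = t * (1 - min s η / (β + η)) - max (t - s) 0 := by
    rw [hk t ⟨by linarith, by linarith⟩ s ⟨hs0, hs1⟩, mul_heaviside_eq_max hH, mul_assoc,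
      mul_heaviside_eq_max hH, max_sub_zero_eq_sub_min]
    field_simp
    ring
  have hΦ' : Φ s = s * (1 - min s η / (β + η)) := by
    rw [hΦ]
    split_ifs with hηs
    · rw [min_eq_right hηs]; field_simp; ring
    · rw [min_eq_left (not_le.mp hηs).le]
  have hc0 : 0 ≤ 1 - b / (β + η) := sub_nonneg.mpr ((div_le_one hB).mpr (by linarith))
  rw [hk', hΦ']
  refine mul_profile_le_mul_profile_sub_pos_part hB (le_min hs0 hη.1.le) (min_le_left _ _)
    ((min_le_right _ _).trans (by linarith)) (by linarith) ?_ ?_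
  · calc min a (1 - b / (β + η)) * s ≤ min a (1 - b / (β + η)) * 1 :=
          mul_le_mul_of_nonneg_left hs1 (le_min ha.le hc0)
      _ ≤ t := by linarith [min_le_left a (1 - b / (β + η))]
  · exact (min_le_right _ _).trans (by gcongr)

/-- Lower bound for the thermostat Green's function when `β + η ≥ 1`:
for `[a,b] ⊂ (0,1)`, `k(t,s) ≥ c₁Φ(s)` for `t ∈ [a,b]`, `s ∈ [0,1]`,
where `c₁ = min{a, 1 - b/(β+η)}`. -/
theorem thermostat_kernel_lower_bound
    (β η : ℝ) (hβ : 0 < β) (hη : η ∈ Ioo (0:ℝ) 1) (hβη : 1 ≤ β + η)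
    (H : ℝ → ℝ) (hH : ∀ τ : ℝ, H τ = if 0 ≤ τ then 1 else 0)
    (k : ℝ → ℝ → ℝ)
    (hk : ∀ t ∈ Icc (0:ℝ) 1, ∀ s ∈ Icc (0:ℝ) 1,
      k t s = β * t / (β + η) + (t / (β + η)) * (η - s) * H (η - s)
        - (t - s) * H (t - s))
    (Φ : ℝ → ℝ)
    (hΦ : ∀ s : ℝ, Φ s = if η ≤ s then (β / (β + η)) * s
      else s * (1 - s / (β + η)))
    (a b : ℝ) (ha : 0 < a) (hab : a ≤ b) (hb : b < 1) :
    ∀ t ∈ Icc a b, ∀ s ∈ Icc (0:ℝ) 1,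
      min a (1 - b / (β + η)) * Φ s ≤ k t s :=
  thermostat_kernel_lower_bound_general β η hβ hη hβη H hH k hk Φ hΦ a b ha hb
end

section
/- For any solution u of −u'' = y on [0,1] with y continuous and boundary conditions u(0)=0 and βu'(1)+u(η)=α, where β>0 and η∈(0,1), one has the representation u(t) = (t/(β+η))α + (βt/(β+η))∫₀¹ y(s)ds + (t/(β+η))∫₀^η (η−s)y(s)ds − ∫₀^t (t−s)y(s)ds. -/
/-!
Taylor's formula with integral remainder at `0` gives `u t = u' 0 * t - ∫₀ᵗ (t - s) y s`, and
`u' 1 = u' 0 - ∫₀¹ y`; the boundary condition `β u' 1 + u η = α` is then a linear equation for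
`u' 0` with coefficient `β + η > 0`.
-/

open Set intervalIntegral

theorem sub_sub_deriv_mul_eq_integral {a b : ℝ} {u u' u'' : ℝ → ℝ}
    (hu' : ∀ t ∈ uIcc a b, HasDerivAt u (u' t) t)
    (hu'' : ∀ t ∈ uIcc a b, HasDerivAt u' (u'' t) t)
    (hint : IntervalIntegrable u'' MeasureTheory.volume a b) :
    u b - u a - u' a * (b - a) = ∫ s in a..b, (b - s) * u'' s := by
  have hlin : ∀ s ∈ uIcc a b, HasDerivAt (fun s => b - s) (-1) s := fun s _ =>
    by simpa using (hasDerivAt_id s).const_sub b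
  have hftc : ∫ s in a..b, u' s = u b - u a :=
    integral_eq_sub_of_hasDerivAt hu' (HasDerivAt.continuousOn hu'').intervalIntegrable
  rw [integral_mul_deriv_eq_deriv_mul hlin hu'' intervalIntegrable_const hint]
  simp only [sub_self, zero_mul, neg_one_mul, integral_neg, hftc]
  ring

/-- Representation formula for solutions of `-u'' = y` on `[0,1]` with
`u(0) = 0` and `β u'(1) + u(η) = α`. -/
theorem solution_representation_thermostat
    (β η A : ℝ) (hβ : 0 < β) (hη : η ∈ Ioo (0:ℝ) 1)
    (u u' y : ℝ → ℝ) (hy : ContinuousOn y (Icc (0:ℝ) 1))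
    (hu' : ∀ t ∈ Icc (0:ℝ) 1, HasDerivAt u (u' t) t)
    (hu'' : ∀ t ∈ Icc (0:ℝ) 1, HasDerivAt u' (-(y t)) t)
    (hbc0 : u 0 = 0)
    (hbc1 : β * u' 1 + u η = A) :
    ∀ t ∈ Icc (0:ℝ) 1,
      u t = (t / (β + η)) * A + (β * t / (β + η)) * (∫ s in (0:ℝ)..1, y s)
        + (t / (β + η)) * (∫ s in (0:ℝ)..η, (η - s) * y s)
        - ∫ s in (0:ℝ)..t, (t - s) * y s := by
  have hsub : ∀ t ∈ Icc (0:ℝ) 1, uIcc 0 t ⊆ Icc 0 1 := fun t ht =>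
    uIcc_subset_Icc ⟨le_rfl, zero_le_one⟩ ht
  have htaylor : ∀ t ∈ Icc (0:ℝ) 1, u t = u' 0 * t - ∫ s in (0:ℝ)..t, (t - s) * y s := by
    intro t ht
    have h := sub_sub_deriv_mul_eq_integral (fun s hs => hu' s (hsub t ht hs))
      (fun s hs => hu'' s (hsub t ht hs)) (hy.mono (hsub t ht)).neg.intervalIntegrable
    simp only [mul_neg, integral_neg, hbc0, sub_zero] at h
    linarith
  have hu'1 : u' 1 = u' 0 - ∫ s in (0:ℝ)..1, y s := by
    have h := integral_eq_sub_of_hasDerivAt (fun s hs => hu'' s (hsub 1 ⟨zero_le_one, le_rfl⟩ hs))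
      (hy.neg.intervalIntegrable_of_Icc zero_le_one)
    rw [integral_neg] at h
    linarith
  have hslope : u' 0 = (A + β * (∫ s in (0:ℝ)..1, y s)
      + ∫ s in (0:ℝ)..η, (η - s) * y s) / (β + η) := by
    rw [eq_div_iff (by linarith [hη.1]), ← hbc1, hu'1, htaylor η (Ioo_subset_Icc_self hη)]
    ring
  intro t ht
  rw [htaylor t ht, hslope]
  ring
end
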